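/- Let q be an odd prime power with q ≡ 3 (mod 4), let m be a positive integer coprime to q, let ℓ be even, and let R = F_q[Y]/(Y^m − 1). Let C_0 ⊆ R^{2ℓ} be a Hermitian self-dual linear code over R generated as an R-module by vectors r_1, …, r_k. Let α, β ∈ R satisfy α·conj(α) + β·conj(β) = −1 and α·conj(β) = conj(α)·β. Let x_1, x_2 ∈ R^{2ℓ} satisfy ⟨x_1, x_2⟩ = 0 and ⟨x_i, x_i⟩ = −1 for i = 1, 2. For 1 ≤ i ≤ k set s_i = −⟨r_i, x_1⟩, t_i = −⟨r_i, x_2⟩, and let y_i = (s_i, t_i, α·s_i + β·t_i, β·s_i − α·t_i) ∈ R^4. Then the R-submodule C of R^{2ℓ+4} generated by (1, 0, 0, 0, x_1), (0, 1, 0, 0, x_2), and the vectors (y_i, r_i) for 1 ≤ i ≤ k is a Hermitian self-dual linear code over R of length 2ℓ+4. -/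

import Mathlib

open Polynomial

noncomputable section

/-- The ring `R = F_q[Y]/(Y^m − 1)`. -/
abbrev Rq (F : Type) [Field F] (m : ℕ) := AdjoinRoot ((X : F[X]) ^ m - 1)

lemma root_pow_eq_one (F : Type) [Field F] (m : ℕ) :
    (AdjoinRoot.root ((X : F[X]) ^ m - 1)) ^ m = 1 := by
  have h : (aeval (AdjoinRoot.root ((X : F[X]) ^ m - 1)) ((X : F[X]) ^ m - 1)) = 0 := by
    rw [AdjoinRoot.aeval_eq, AdjoinRoot.mk_self]
  simp only [map_sub, map_pow, aeval_X, map_one, sub_eq_zero] at h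
  exact h

/-- Conjugation on `R`: the `F`-algebra map determined by `Y ↦ Y^{m−1} (= Y⁻¹)`. -/
noncomputable def conjR (F : Type) [Field F] (m : ℕ) : Rq F m →ₐ[F] Rq F m :=
  AdjoinRoot.liftAlgHom _ (Algebra.ofId F _) ((AdjoinRoot.root ((X : F[X]) ^ m - 1)) ^ (m - 1)) (by
    change aeval ((AdjoinRoot.root ((X : F[X]) ^ m - 1)) ^ (m - 1)) ((X : F[X]) ^ m - 1) = 0
    simp only [map_sub, map_pow, aeval_X, map_one, sub_eq_zero, ← pow_mul]
    rw [mul_comm, pow_mul, root_pow_eq_one, one_pow])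

/-- The Hermitian inner product `⟨x,y⟩ = Σ_j x_j ⬝ conj(y_j)` on `R^n`. -/
def herm (F : Type) [Field F] (m : ℕ) {n : ℕ} (x y : Fin n → Rq F m) : Rq F m :=
  ∑ j, x j * conjR F m (y j)

/-- A linear code `C ⊆ R^n` is Hermitian self-dual if `C = C^⊥`, i.e. membership in `C`
coincides with orthogonality to all of `C`. -/
def IsHermSelfDual (F : Type) [Field F] (m : ℕ) {n : ℕ}
    (C : Submodule (Rq F m) (Fin n → Rq F m)) : Prop :=
  ∀ y, y ∈ C ↔ ∀ x ∈ C, herm F m x y = 0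


/-!
Only the fact that conjugation is an involutive ring automorphism matters, so the argument is
carried out over any commutative ring `R` with an involution `σ`.

Put `e₁ = (1,0,0,0,x₁)`, `e₂ = (0,1,0,0,x₂)` and `lift y = (s, t, αs + βt, βs − αt, y)` with
`s = −⟨y,x₁⟩`, `t = −⟨y,x₂⟩`; the new code is spanned by `e₁`, `e₂` and `lift C₀`. The conditions
on `α, β` say that `M = [[α, β], [β, −α]]` satisfies `M* M = −1`, so the head `(s, t, M(s,t))` is
isotropic and `lift` is an isometry; `e₁`, `e₂` are isotropic, orthogonal to each other and to
every `lift y`. Hence the code is self-orthogonal. Conversely, if `(a, w)` is orthogonal to the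
code, orthogonality to `e₁`, `e₂` gives `a₀ = −⟨w,x₁⟩`, `a₁ = −⟨w,x₂⟩`; subtracting `c₁e₁ + c₂e₂`,
with `(c₁, c₂)` read off from `M⁻¹ = −M*`, leaves `lift y` for `y = w − c₁x₁ − c₂x₂`, and the
isometry turns orthogonality to `lift C₀` into `y ∈ C₀^⊥ = C₀`.
-/
lemma conjR_root_mul_root {F : Type} [Field F] {m : ℕ} (hm : 0 < m) :
    conjR F m (AdjoinRoot.root _) * AdjoinRoot.root ((X : F[X]) ^ m - 1) = 1 := by
  rw [conjR, AdjoinRoot.liftAlgHom_root, ← pow_succ, Nat.sub_add_cancel hm, root_pow_eq_one]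

lemma conjR_involutive {F : Type} [Field F] {m : ℕ} (hm : 0 < m) :
    Function.Involutive (conjR F m) := by
  have h := conjR_root_mul_root (F := F) hm
  have hroot : conjR F m (conjR F m (AdjoinRoot.root _)) = AdjoinRoot.root _ :=
    left_inv_eq_right_inv (by rw [← map_mul, h, map_one]) h
  have hcomp : (conjR F m).comp (conjR F m) = AlgHom.id F _ := AdjoinRoot.algHom_ext hroot
  exact fun x => AlgHom.congr_fun hcomp x

theorem Submodule.mem_orthogonalBilin_span_iff {R₁ R₂ S M₁ M₂ M : Type*} [CommSemiring R₁]
    [CommSemiring R₂] [CommSemiring S] [AddCommMonoid M₁] [Module R₁ M₁] [AddCommMonoid M₂]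
    [Module R₂ M₂] [AddCommMonoid M] [Module S M] {I₁ : R₁ →+* S} {I₂ : R₂ →+* S}
    {B : M₁ →ₛₗ[I₁] M₂ →ₛₗ[I₂] M} {G : Set M₁} {y : M₂} :
    y ∈ (span R₁ G).orthogonalBilin B ↔ ∀ x ∈ G, B x y = 0 :=
  ⟨fun h x hx => h x (subset_span hx),
    fun h => (span_le (p := LinearMap.ker (B.flip y))).2 h⟩

section HermitianForm

variable {R : Type*} [CommRing R] (σ : R →+* R) {ι : Type*} [Fintype ι]

def hermForm : (ι → R) →ₗ[R] (ι → R) →ₛₗ[σ] R :=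
  LinearMap.mk₂'ₛₗ (RingHom.id R) σ (fun x y => ∑ j, x j * σ (y j))
    (fun _ _ _ => by simp [add_mul, Finset.sum_add_distrib])
    (fun _ _ _ => by simp [Finset.mul_sum, mul_assoc])
    (fun _ _ _ => by simp [mul_add, Finset.sum_add_distrib])
    (fun _ _ _ => by simp [Finset.mul_sum, mul_left_comm])

variable {σ}

lemma hermForm_apply (x y : ι → R) : hermForm σ x y = ∑ j, x j * σ (y j) := rfl

lemma map_hermForm (hσ : Function.Involutive σ) (x y : ι → R) :
    σ (hermForm σ x y) = hermForm σ y x := by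
  simp [hermForm_apply, hσ _, mul_comm]

lemma hermForm_append {n₁ n₂ : ℕ} (u v : Fin n₁ → R) (x y : Fin n₂ → R) :
    hermForm σ (Fin.append u x) (Fin.append v y) = hermForm σ u v + hermForm σ x y := by
  simp [hermForm_apply, Fin.sum_univ_add]

lemma hermForm_fin_four (u v : Fin 4 → R) :
    hermForm σ u v = u 0 * σ (v 0) + u 1 * σ (v 1) + u 2 * σ (v 2) + u 3 * σ (v 3) :=
  Fin.sum_univ_four fun j => u j * σ (v j)

end HermitianForm

section BuildingUp

open Submodule

variable {R : Type*} [CommRing R] (σ : R →+* R) {n : ℕ} (α β : R) (x₁ x₂ : Fin n → R)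

def buildUpHead (s t : R) : Fin 4 → R := ![s, t, α * s + β * t, β * s - α * t]

def buildUpLift : (Fin n → R) →ₗ[R] (Fin (4 + n) → R) where
  toFun y := Fin.append (buildUpHead α β (-hermForm σ y x₁) (-hermForm σ y x₂)) y
  map_add' y y' := by
    funext j
    refine Fin.addCases (fun i => ?_) (fun i => ?_) j
    · fin_cases i <;> simp [buildUpHead] <;> ring
    · simp
  map_smul' c y := by
    funext j
    refine Fin.addCases (fun i => ?_) (fun i => ?_) j
    · fin_cases i <;> simp [buildUpHead] <;> ring
    · simp

def buildUpCode {ι : Type*} (r : ι → Fin n → R) : Submodule R (Fin (4 + n) → R) :=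
  span R ({Fin.append ![1, 0, 0, 0] x₁, Fin.append ![0, 1, 0, 0] x₂} ∪
    Set.range (buildUpLift σ α β x₁ x₂ ∘ r))

variable {σ α β x₁ x₂}

lemma buildUpLift_apply (y : Fin n → R) :
    buildUpLift σ α β x₁ x₂ y =
      Fin.append (buildUpHead α β (-hermForm σ y x₁) (-hermForm σ y x₂)) y := rfl

lemma hermForm_buildUpHead_eq_zero (hαβ : α * σ α + β * σ β = -1) (hαβ' : α * σ β = σ α * β)
    (s t s' t' : R) : hermForm σ (buildUpHead α β s t) (buildUpHead α β s' t') = 0 := by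
  simp only [hermForm_fin_four, buildUpHead, Matrix.cons_val_zero, Matrix.cons_val_one,
    Matrix.cons_val, map_add, map_sub, map_mul]
  linear_combination (s * σ s' + t * σ t') * hαβ + (s * σ t' - t * σ s') * hαβ'

lemma hermForm_buildUpLift (hαβ : α * σ α + β * σ β = -1) (hαβ' : α * σ β = σ α * β)
    (y y' : Fin n → R) :
    hermForm σ (buildUpLift σ α β x₁ x₂ y) (buildUpLift σ α β x₁ x₂ y') = hermForm σ y y' := by
  rw [buildUpLift_apply, buildUpLift_apply, hermForm_append,
    hermForm_buildUpHead_eq_zero hαβ hαβ', zero_add]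

lemma hermForm_buildUpLift_e₁ (y : Fin n → R) :
    hermForm σ (buildUpLift σ α β x₁ x₂ y) (Fin.append ![1, 0, 0, 0] x₁) = 0 := by
  simp [buildUpLift_apply, buildUpHead, hermForm_append, hermForm_fin_four]

lemma hermForm_buildUpLift_e₂ (y : Fin n → R) :
    hermForm σ (buildUpLift σ α β x₁ x₂ y) (Fin.append ![0, 1, 0, 0] x₂) = 0 := by
  simp [buildUpLift_apply, buildUpHead, hermForm_append, hermForm_fin_four]

lemma buildUpCode_le_orthogonalBilin (hσ : Function.Involutive σ)
    (hαβ : α * σ α + β * σ β = -1) (hαβ' : α * σ β = σ α * β)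
    (hx₁₂ : hermForm σ x₁ x₂ = 0) (hx₁ : hermForm σ x₁ x₁ = -1) (hx₂ : hermForm σ x₂ x₂ = -1)
    {ι : Type*} {r : ι → Fin n → R}
    (hC₀ : span R (Set.range r) ≤ (span R (Set.range r)).orthogonalBilin (hermForm σ)) :
    buildUpCode σ α β x₁ x₂ r ≤ (buildUpCode σ α β x₁ x₂ r).orthogonalBilin (hermForm σ) := by
  have hx₂₁ : hermForm σ x₂ x₁ = 0 := by rw [← map_hermForm hσ, hx₁₂, map_zero]
  refine span_le.2 fun y hy => mem_orthogonalBilin_span_iff.2 fun x hx => ?_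
  rcases hx with (rfl | rfl) | ⟨i, rfl⟩ <;> rcases hy with (rfl | rfl) | ⟨j, rfl⟩
  · simp [hermForm_append, hermForm_fin_four, hx₁]
  · simp [hermForm_append, hermForm_fin_four, hx₁₂]
  · rw [← map_hermForm hσ, Function.comp_apply, hermForm_buildUpLift_e₁, map_zero]
  · simp [hermForm_append, hermForm_fin_four, hx₂₁]
  · simp [hermForm_append, hermForm_fin_four, hx₂]
  · rw [← map_hermForm hσ, Function.comp_apply, hermForm_buildUpLift_e₂, map_zero]
  · exact hermForm_buildUpLift_e₁ _
  · exact hermForm_buildUpLift_e₂ _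
  · rw [Function.comp_apply, Function.comp_apply, hermForm_buildUpLift hαβ hαβ']
    exact hC₀ (subset_span ⟨j, rfl⟩) _ (subset_span ⟨i, rfl⟩)

lemma exists_append_eq_buildUpLift (hαβ : α * σ α + β * σ β = -1) (hαβ' : α * σ β = σ α * β)
    (hx₁₂ : hermForm σ x₁ x₂ = 0) (hx₂₁ : hermForm σ x₂ x₁ = 0) (hx₁ : hermForm σ x₁ x₁ = -1)
    (hx₂ : hermForm σ x₂ x₂ = -1) {a : Fin 4 → R} {w : Fin n → R}
    (ha₀ : a 0 = -hermForm σ w x₁) (ha₁ : a 1 = -hermForm σ w x₂) :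
    ∃ c₁ c₂ : R, Fin.append a w = c₁ • Fin.append ![1, 0, 0, 0] x₁ +
      c₂ • Fin.append ![0, 1, 0, 0] x₂ + buildUpLift σ α β x₁ x₂ (w - c₁ • x₁ - c₂ • x₂) := by
  refine ⟨a 0 + σ α * a 2 + σ β * a 3, a 1 + σ β * a 2 - σ α * a 3, ?_⟩
  set c₁ := a 0 + σ α * a 2 + σ β * a 3 with hc₁
  set c₂ := a 1 + σ β * a 2 - σ α * a 3 with hc₂
  have hs : -hermForm σ (w - c₁ • x₁ - c₂ • x₂) x₁ = -(σ α * a 2 + σ β * a 3) := by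
    simp only [map_sub, map_smul, LinearMap.sub_apply, LinearMap.smul_apply, hx₁, hx₂₁,
      smul_eq_mul]
    linear_combination -ha₀
  have ht : -hermForm σ (w - c₁ • x₁ - c₂ • x₂) x₂ = -(σ β * a 2 - σ α * a 3) := by
    simp only [map_sub, map_smul, LinearMap.sub_apply, LinearMap.smul_apply, hx₂, hx₁₂,
      smul_eq_mul]
    linear_combination -ha₁
  rw [buildUpLift_apply, hs, ht]
  funext j
  refine Fin.addCases (fun i => ?_) (fun i => ?_) j
  · fin_cases i <;> simp only [Fin.zero_eta, Fin.mk_one, Fin.reduceFinMk, Fin.append_left,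
      Pi.add_apply, Pi.smul_apply, smul_eq_mul, buildUpHead, Matrix.cons_val_zero,
      Matrix.cons_val_one, Matrix.cons_val]
    · linear_combination -hc₁
    · linear_combination -hc₂
    · linear_combination a 2 * hαβ + a 3 * hαβ'
    · linear_combination a 3 * hαβ - a 2 * hαβ'
  · simp

lemma orthogonalBilin_le_buildUpCode (hσ : Function.Involutive σ)
    (hαβ : α * σ α + β * σ β = -1) (hαβ' : α * σ β = σ α * β)
    (hx₁₂ : hermForm σ x₁ x₂ = 0) (hx₁ : hermForm σ x₁ x₁ = -1) (hx₂ : hermForm σ x₂ x₂ = -1)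
    {ι : Type*} {r : ι → Fin n → R}
    (hC₀ : (span R (Set.range r)).orthogonalBilin (hermForm σ) ≤ span R (Set.range r)) :
    (buildUpCode σ α β x₁ x₂ r).orthogonalBilin (hermForm σ) ≤ buildUpCode σ α β x₁ x₂ r := by
  have hx₂₁ : hermForm σ x₂ x₁ = 0 := by rw [← map_hermForm hσ, hx₁₂, map_zero]
  intro v hv
  have hG := mem_orthogonalBilin_span_iff.1 hv
  obtain ⟨a, w, rfl⟩ : ∃ a w, v = Fin.append a w := ⟨_, _, Fin.append_castAdd_natAdd.symm⟩
  have ha₀ : a 0 = -hermForm σ w x₁ := by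
    have h : σ (a 0) + hermForm σ x₁ w = 0 := by
      simpa [hermForm_append, hermForm_fin_four] using hG _ (.inl (.inl rfl))
    rw [← hσ (a 0), eq_neg_of_add_eq_zero_left h, map_neg, map_hermForm hσ]
  have ha₁ : a 1 = -hermForm σ w x₂ := by
    have h : σ (a 1) + hermForm σ x₂ w = 0 := by
      simpa [hermForm_append, hermForm_fin_four] using hG _ (.inl (.inr rfl))
    rw [← hσ (a 1), eq_neg_of_add_eq_zero_left h, map_neg, map_hermForm hσ]
  obtain ⟨c₁, c₂, hdecomp⟩ :=
    exists_append_eq_buildUpLift hαβ hαβ' hx₁₂ hx₂₁ hx₁ hx₂ ha₀ ha₁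
  set y := w - c₁ • x₁ - c₂ • x₂
  have hy : y ∈ span R (Set.range r) := by
    refine hC₀ (mem_orthogonalBilin_span_iff.2 ?_)
    rintro _ ⟨i, rfl⟩
    rw [← hermForm_buildUpLift hαβ hαβ', eq_sub_of_add_eq' hdecomp.symm]
    simp only [map_sub, map_add, LinearMap.map_smulₛₗ, hermForm_buildUpLift_e₁,
      hermForm_buildUpLift_e₂, smul_zero, add_zero, sub_zero]
    exact hG _ (.inr ⟨i, rfl⟩)
  have hlift : buildUpLift σ α β x₁ x₂ y ∈ buildUpCode σ α β x₁ x₂ r := by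
    refine span_mono Set.subset_union_right ?_
    rw [Set.range_comp, ← map_span]
    exact mem_map_of_mem hy
  rw [hdecomp]
  exact add_mem (add_mem (smul_mem _ _ (subset_span (.inl (.inl rfl))))
    (smul_mem _ _ (subset_span (.inl (.inr rfl))))) hlift

theorem orthogonalBilin_buildUpCode (hσ : Function.Involutive σ)
    (hαβ : α * σ α + β * σ β = -1) (hαβ' : α * σ β = σ α * β)
    (hx₁₂ : hermForm σ x₁ x₂ = 0) (hx₁ : hermForm σ x₁ x₁ = -1) (hx₂ : hermForm σ x₂ x₂ = -1)
    {ι : Type*} {r : ι → Fin n → R}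
    (hC₀ : (span R (Set.range r)).orthogonalBilin (hermForm σ) = span R (Set.range r)) :
    (buildUpCode σ α β x₁ x₂ r).orthogonalBilin (hermForm σ) = buildUpCode σ α β x₁ x₂ r :=
  le_antisymm (orthogonalBilin_le_buildUpCode hσ hαβ hαβ' hx₁₂ hx₁ hx₂ hC₀.le)
    (buildUpCode_le_orthogonalBilin hσ hαβ hαβ' hx₁₂ hx₁ hx₂ hC₀.ge)

end BuildingUp

lemma isHermSelfDual_iff {F : Type} [Field F] {m n : ℕ}
    {C : Submodule (Rq F m) (Fin n → Rq F m)} :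
    IsHermSelfDual F m C ↔ C.orthogonalBilin (hermForm (conjR F m : Rq F m →+* Rq F m)) = C := by
  rw [SetLike.ext_iff]
  exact forall_congr' fun _ => Iff.comm

theorem statement3_general (F : Type) [Field F]
    (m : ℕ) (hm : 0 < m)
    (ℓ : ℕ) (k : ℕ) (r : Fin k → (Fin (2 * ℓ) → Rq F m))
    (C₀ : Submodule (Rq F m) (Fin (2 * ℓ) → Rq F m))
    (hC₀span : C₀ = Submodule.span (Rq F m) (Set.range r))
    (hC₀sd : IsHermSelfDual F m C₀)
    (α β : Rq F m)
    (hαβ : α * conjR F m α + β * conjR F m β = -1)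
    (hαβ' : α * conjR F m β = conjR F m α * β)
    (x₁ x₂ : Fin (2 * ℓ) → Rq F m)
    (hx₁₂ : herm F m x₁ x₂ = 0)
    (hx₁ : herm F m x₁ x₁ = -1) (hx₂ : herm F m x₂ x₂ = -1)
    (s t : Fin k → Rq F m)
    (hs : ∀ i, s i = - herm F m (r i) x₁) (ht : ∀ i, t i = - herm F m (r i) x₂) :
    IsHermSelfDual F m
      (Submodule.span (Rq F m)
        (({Fin.append ![1, 0, 0, 0] x₁, Fin.append ![0, 1, 0, 0] x₂} :
            Set (Fin (4 + 2 * ℓ) → Rq F m)) ∪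
          Set.range fun i =>
            Fin.append ![s i, t i, α * s i + β * t i, β * s i - α * t i] (r i))) := by
  have hgens : (fun i => Fin.append ![s i, t i, α * s i + β * t i, β * s i - α * t i] (r i)) =
      buildUpLift (conjR F m : Rq F m →+* Rq F m) α β x₁ x₂ ∘ r := by
    funext i
    rw [hs, ht]
    rfl
  subst hC₀span
  rw [isHermSelfDual_iff] at hC₀sd ⊢
  rw [hgens]
  exact orthogonalBilin_buildUpCode (conjR_involutive hm) hαβ hαβ' hx₁₂ hx₁ hx₂ hC₀sd

/-- Building-up construction, `q ≡ 3 (mod 4)` case. -/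
theorem statement3 (F : Type) [Field F] [Fintype F]
    (hq : Fintype.card F % 4 = 3)
    (m : ℕ) (hm : 0 < m) (hcop : Nat.Coprime m (Fintype.card F))
    (ℓ : ℕ) (hℓ : Even ℓ) (k : ℕ) (r : Fin k → (Fin (2 * ℓ) → Rq F m))
    (C₀ : Submodule (Rq F m) (Fin (2 * ℓ) → Rq F m))
    (hC₀span : C₀ = Submodule.span (Rq F m) (Set.range r))
    (hC₀sd : IsHermSelfDual F m C₀)
    (α β : Rq F m)
    (hαβ : α * conjR F m α + β * conjR F m β = -1)
    (hαβ' : α * conjR F m β = conjR F m α * β)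
    (x₁ x₂ : Fin (2 * ℓ) → Rq F m)
    (hx₁₂ : herm F m x₁ x₂ = 0)
    (hx₁ : herm F m x₁ x₁ = -1) (hx₂ : herm F m x₂ x₂ = -1)
    (s t : Fin k → Rq F m)
    (hs : ∀ i, s i = - herm F m (r i) x₁) (ht : ∀ i, t i = - herm F m (r i) x₂) :
    IsHermSelfDual F m
      (Submodule.span (Rq F m)
        (({Fin.append ![1, 0, 0, 0] x₁, Fin.append ![0, 1, 0, 0] x₂} :
            Set (Fin (4 + 2 * ℓ) → Rq F m)) ∪
          Set.range fun i =>
            Fin.append ![s i, t i, α * s i + β * t i, β * s i - α * t i] (r i))) :=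
  statement3_general F m hm ℓ k r C₀ hC₀span hC₀sd α β hαβ hαβ' x₁ x₂ hx₁₂ hx₁ hx₂ s t hs ht
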